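/- arXiv:0810.5000 — 4 statements merged into one kernel-verified Lean document; each statement's English description precedes it below -/
import Mathlib

section
/- Let k, γ_p (p=1,…,ℓ-1) be complex numbers, ε a primitive ℓ-th root of unity, and for each i∈{1,…,n} define the connection operator ∇'_i = ∂_{x_i} + k·Σ_{j≠i} Σ_{p=1}^{ℓ} 1/(x_i − ε^{−p} x_j) + Σ_{p=1}^{ℓ−1} γ_p/(x_i − ε^{−p} x_i), acting on rational functions in x_1,…,x_n regular away from the hyperplanes x_i = ε^p x_j (i≠j) and x_i = 0. Then for all i ≠ j the operators commute: [∇'_i, ∇'_j] = 0. -/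
/-! Writing `∇'_i = ∂_i + A_i`, the commutator `[∇'_i, ∇'_j]` is multiplication by
`∂_i A_j - ∂_j A_i`, since second derivatives of a `C²` function commute. Only the terms
`1/(x_j - ε^{-p} x_i)` of `A_j` depend on `x_i`, so `∂_i A_j = k Σ_p ε^{-p}/(x_j - ε^{-p} x_i)²`,
and the substitution `p ↦ -p` in `ℤ/ℓ` shows that this expression is symmetric in `x_i, x_j`. -/

/-- The operator `∇'_i = ∂_{x_i} + k Σ_{j≠i} Σ_{p=1}^{ℓ} 1/(x_i - ε^{-p} x_j)
+ Σ_{p=1}^{ℓ-1} γ_p/(x_i - ε^{-p} x_i)` acting on functions on `ℂ^n`. -/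
noncomputable def nablaP (n ℓ : ℕ) (ε k : ℂ) (γ : ℕ → ℂ) (i : Fin n)
    (f : (Fin n → ℂ) → ℂ) : (Fin n → ℂ) → ℂ := fun x =>
  fderiv ℂ f x (Pi.single i 1) +
    (k * ∑ j ∈ Finset.univ.erase i, ∑ p ∈ Finset.range ℓ,
        (x i - ε⁻¹ ^ (p + 1) * x j)⁻¹
      + ∑ p ∈ Finset.Ico 1 ℓ, γ p * (x i - ε⁻¹ ^ p * x i)⁻¹) * f x

open Finset ContinuousLinearMap

section CovariantDerivative

variable {𝕜 E : Type*} [RCLike 𝕜] [NormedAddCommGroup E] [NormedSpace 𝕜 E]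

noncomputable def covDeriv (A : E → 𝕜) (v : E) (f : E → 𝕜) : E → 𝕜 :=
  fun y => fderiv 𝕜 f y v + A y * f y

lemma fderiv_covDeriv_apply {A f : E → 𝕜} {x : E} (hA : DifferentiableAt 𝕜 A x)
    (hf : DifferentiableAt 𝕜 f x) (hf' : DifferentiableAt 𝕜 (fderiv 𝕜 f) x) (v w : E) :
    fderiv 𝕜 (covDeriv A w f) x v
      = fderiv 𝕜 (fderiv 𝕜 f) x v w + fderiv 𝕜 A x v * f x + A x * fderiv 𝕜 f x v := by
  have hderiv : HasFDerivAt (covDeriv A w f)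
      ((apply 𝕜 𝕜 w).comp (fderiv 𝕜 (fderiv 𝕜 f) x) + (A x • fderiv 𝕜 f x + f x • fderiv 𝕜 A x))
      x :=
    ((apply 𝕜 𝕜 w).hasFDerivAt.comp x hf'.hasFDerivAt).add (hA.hasFDerivAt.mul hf.hasFDerivAt)
  rw [hderiv.fderiv]
  simp only [add_apply, comp_apply, apply_apply, smul_apply, smul_eq_mul]
  ring

theorem covDeriv_comm_sub {A B f : E → 𝕜} {x : E} (hA : DifferentiableAt 𝕜 A x)
    (hB : DifferentiableAt 𝕜 B x) (hf : ContDiffAt 𝕜 2 f x) (v w : E) :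
    covDeriv A v (covDeriv B w f) x - covDeriv B w (covDeriv A v f) x
      = (fderiv 𝕜 B x v - fderiv 𝕜 A x w) * f x := by
  have hf₁ : DifferentiableAt 𝕜 f x := hf.differentiableAt (by norm_num)
  have hf₂ : DifferentiableAt 𝕜 (fderiv 𝕜 f) x :=
    (hf.fderiv_right (m := 1) (by norm_num)).differentiableAt one_ne_zero
  have hsymm : fderiv 𝕜 (fderiv 𝕜 f) x v w = fderiv 𝕜 (fderiv 𝕜 f) x w v :=
    hf.isSymmSndFDerivAt (by simp [minSmoothness_of_isRCLikeNormedField]) v w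
  simp only [covDeriv, fderiv_covDeriv_apply hA hf₁ hf₂, fderiv_covDeriv_apply hB hf₁ hf₂, hsymm]
  ring

end CovariantDerivative

lemma sum_range_inv_pow_succ {G M : Type*} [DivisionMonoid G] [AddCommMonoid M] {ζ : G} {ℓ : ℕ}
    (hζ : ζ ^ ℓ = 1) (g : G → M) :
    ∑ p ∈ range ℓ, g (ζ ^ (p + 1))⁻¹ = ∑ p ∈ range ℓ, g (ζ ^ (p + 1)) := by
  have hshift : ∑ p ∈ range ℓ, g (ζ ^ (p + 1))⁻¹ = ∑ p ∈ range ℓ, g (ζ ^ p)⁻¹ := by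
    cases ℓ with
    | zero => rfl
    | succ m => rw [sum_range_succ, sum_range_succ' (fun p => g (ζ ^ p)⁻¹), hζ, pow_zero]
  rw [hshift, ← sum_range_reflect]
  refine sum_congr rfl fun p hp => congrArg g (eq_inv_of_mul_eq_one_left ?_).symm
  rw [← pow_add, ← hζ]
  congr 1
  rw [mem_range] at hp
  omega

lemma inv_mul_inv_sq_sub_inv_mul {K : Type*} [Field K] {c : K} (hc : c ≠ 0) (a b : K) :
    c⁻¹ * ((a - c⁻¹ * b) ^ 2)⁻¹ = c * ((b - c * a) ^ 2)⁻¹ := by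
  rw [show a - c⁻¹ * b = -c⁻¹ * (b - c * a) by field_simp; ring, mul_pow, neg_sq, mul_inv, inv_pow,
    inv_inv, ← mul_assoc]
  congr 1
  field_simp

lemma sum_pow_succ_mul_inv_sq_sub_comm {K : Type*} [Field K] {ζ : K} {ℓ : ℕ} (hζ : ζ ^ ℓ = 1)
    (a b : K) :
    ∑ p ∈ range ℓ, ζ ^ (p + 1) * ((a - ζ ^ (p + 1) * b) ^ 2)⁻¹
      = ∑ p ∈ range ℓ, ζ ^ (p + 1) * ((b - ζ ^ (p + 1) * a) ^ 2)⁻¹ := by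
  rw [← sum_range_inv_pow_succ hζ fun c => c * ((a - c * b) ^ 2)⁻¹]
  refine sum_congr rfl fun p hp => inv_mul_inv_sq_sub_inv_mul (pow_ne_zero _ ?_) a b
  exact ne_zero_pow (by rw [mem_range] at hp; omega) (hζ ▸ one_ne_zero)

lemma isOpen_setOf_forall_ne_pow_mul {ι R : Type*} [Finite ι] [Ring R] [TopologicalSpace R]
    [IsTopologicalRing R] [T2Space R] {ε : R} (hε : IsOfFinOrder ε) :
    IsOpen {x : ι → R | ∀ i j, i ≠ j → ∀ p : ℕ, x i ≠ ε ^ p * x j} := by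
  have hset : {x : ι → R | ∀ i j, i ≠ j → ∀ p : ℕ, x i ≠ ε ^ p * x j}
      = ⋂ (i) (j) (_ : i ≠ j), ⋂ ω ∈ (Submonoid.powers ε : Set R), {x | x i ≠ ω * x j} := by
    ext x
    simp [Submonoid.mem_powers_iff]
  rw [hset]
  refine isOpen_iInter_of_finite fun i => isOpen_iInter_of_finite fun j =>
    isOpen_iInter_of_finite fun _ => hε.finite_powers.isOpen_biInter fun ω _ => ?_
  exact isOpen_ne_fun (continuous_apply i) (continuous_const.mul (continuous_apply j))

lemma hasFDerivAt_inv_sub_mul {ι : Type*} [Fintype ι] (c : ℂ) (a b : ι) {x : ι → ℂ}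
    (hx : x a - c * x b ≠ 0) :
    HasFDerivAt (fun y : ι → ℂ => (y a - c * y b)⁻¹)
      (-((x a - c * x b) ^ 2)⁻¹ • (proj a - c • proj b : (ι → ℂ) →L[ℂ] ℂ)) x :=
  (hasDerivAt_inv hx).comp_hasFDerivAt x ((proj a - c • proj b : (ι → ℂ) →L[ℂ] ℂ).hasFDerivAt)

noncomputable def nablaPCoeff (n ℓ : ℕ) (ε k : ℂ) (γ : ℕ → ℂ) (i : Fin n) (x : Fin n → ℂ) : ℂ :=
  k * ∑ j ∈ univ.erase i, ∑ p ∈ range ℓ, (x i - ε⁻¹ ^ (p + 1) * x j)⁻¹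
    + ∑ p ∈ Ico 1 ℓ, γ p * (x i - ε⁻¹ ^ p * x i)⁻¹

def offHyperplanes (n : ℕ) (ε : ℂ) : Set (Fin n → ℂ) :=
  {x | (∀ i, x i ≠ 0) ∧ ∀ i j : Fin n, i ≠ j → ∀ p : ℕ, x i ≠ ε ^ p * x j}

section

variable {n ℓ : ℕ} {ε k : ℂ} {γ : ℕ → ℂ}

lemma nablaP_eq_covDeriv (i : Fin n) :
    nablaP n ℓ ε k γ i = covDeriv (nablaPCoeff n ℓ ε k γ i) (Pi.single i 1) :=
  rfl

lemma isOpen_offHyperplanes (hε : IsOfFinOrder ε) : IsOpen (offHyperplanes n ε) := by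
  have h₀ : IsOpen {x : Fin n → ℂ | ∀ i, x i ≠ 0} := by
    simpa only [Set.ofPred_forall] using
      isOpen_iInter_of_finite fun i => isOpen_ne_fun (continuous_apply i) continuous_const
  exact h₀.inter (isOpen_setOf_forall_ne_pow_mul hε)

lemma sub_inv_pow_mul_ne_zero (hℓ : 0 < ℓ) (hε : IsPrimitiveRoot ε ℓ) {x : Fin n → ℂ}
    (hx : x ∈ offHyperplanes n ε) {i j : Fin n} (hij : i ≠ j) (p : ℕ) :
    x i - ε⁻¹ ^ p * x j ≠ 0 := by
  have : NeZero ℓ := ⟨hℓ.ne'⟩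
  obtain ⟨q, -, hq⟩ := hε.eq_pow_of_pow_eq_one (ξ := ε⁻¹ ^ p)
    (by rw [← pow_mul, mul_comm, pow_mul, inv_pow, hε.pow_eq_one, inv_one, one_pow])
  rw [sub_ne_zero, ← hq]
  exact hx.2 i j hij q

lemma sub_inv_pow_mul_self_ne_zero (hε : IsPrimitiveRoot ε ℓ) {x : Fin n → ℂ}
    (hx : x ∈ offHyperplanes n ε) (i : Fin n) {p : ℕ} (hp : p ∈ Ico 1 ℓ) :
    x i - ε⁻¹ ^ p * x i ≠ 0 := by
  rw [mem_Ico] at hp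
  rw [← one_sub_mul]
  exact mul_ne_zero (sub_ne_zero.2 (hε.inv.pow_ne_one_of_pos_of_lt (by omega) hp.2).symm) (hx.1 i)

lemma hasFDerivAt_nablaPCoeff {i : Fin n} {x : Fin n → ℂ}
    (h₁ : ∀ j ≠ i, ∀ p, x i - ε⁻¹ ^ p * x j ≠ 0) (h₂ : ∀ p ∈ Ico 1 ℓ, x i - ε⁻¹ ^ p * x i ≠ 0) :
    HasFDerivAt (nablaPCoeff n ℓ ε k γ i)
      (k • ∑ j ∈ univ.erase i, ∑ p ∈ range ℓ, -((x i - ε⁻¹ ^ (p + 1) * x j) ^ 2)⁻¹ •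
            (proj i - ε⁻¹ ^ (p + 1) • proj j : (Fin n → ℂ) →L[ℂ] ℂ)
        + ∑ p ∈ Ico 1 ℓ, γ p • -((x i - ε⁻¹ ^ p * x i) ^ 2)⁻¹ •
            (proj i - ε⁻¹ ^ p • proj i : (Fin n → ℂ) →L[ℂ] ℂ)) x :=
  (HasFDerivAt.const_mul (HasFDerivAt.fun_sum fun j hj => HasFDerivAt.fun_sum fun p _ =>
      hasFDerivAt_inv_sub_mul _ i j (h₁ j (ne_of_mem_erase hj) (p + 1))) k).add
    (HasFDerivAt.fun_sum fun p hp =>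
      (hasFDerivAt_inv_sub_mul _ i i (h₂ p hp)).const_mul (γ p))

lemma differentiableAt_nablaPCoeff (hℓ : 0 < ℓ) (hε : IsPrimitiveRoot ε ℓ) {x : Fin n → ℂ}
    (hx : x ∈ offHyperplanes n ε) (i : Fin n) :
    DifferentiableAt ℂ (nablaPCoeff n ℓ ε k γ i) x :=
  (hasFDerivAt_nablaPCoeff (fun _ hj => sub_inv_pow_mul_ne_zero hℓ hε hx hj.symm)
    fun _ hp => sub_inv_pow_mul_self_ne_zero hε hx i hp).differentiableAt

lemma fderiv_nablaPCoeff_single (hℓ : 0 < ℓ) (hε : IsPrimitiveRoot ε ℓ) {x : Fin n → ℂ}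
    (hx : x ∈ offHyperplanes n ε) {i j : Fin n} (hij : i ≠ j) :
    fderiv ℂ (nablaPCoeff n ℓ ε k γ j) x (Pi.single i 1)
      = k * ∑ p ∈ range ℓ, ε⁻¹ ^ (p + 1) * ((x j - ε⁻¹ ^ (p + 1) * x i) ^ 2)⁻¹ := by
  rw [(hasFDerivAt_nablaPCoeff (fun _ hm => sub_inv_pow_mul_ne_zero hℓ hε hx hm.symm)
    fun _ hp => sub_inv_pow_mul_self_ne_zero hε hx j hp).fderiv]
  simp [Pi.single_apply, hij.symm, sum_ite_eq', mul_comm]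

end

theorem stmt_0_general (n ℓ : ℕ) (hℓ : 0 < ℓ)
    (ε : ℂ) (hε : IsPrimitiveRoot ε ℓ) (k : ℂ) (γ : ℕ → ℂ)
    (U : Set (Fin n → ℂ))
    (hU : U = {x | (∀ i, x i ≠ 0) ∧
      ∀ i j : Fin n, i ≠ j → ∀ p : ℕ, x i ≠ ε ^ p * x j})
    (f : (Fin n → ℂ) → ℂ) (hf : ContDiffOn ℂ 2 f U) :
    ∀ i j : Fin n, i ≠ j → ∀ x ∈ U,
      nablaP n ℓ ε k γ i (nablaP n ℓ ε k γ j f) x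
        = nablaP n ℓ ε k γ j (nablaP n ℓ ε k γ i f) x := by
  subst hU
  intro i j hij x hx
  have hfx : ContDiffAt ℂ 2 f x :=
    hf.contDiffAt ((isOpen_offHyperplanes (hε.isOfFinOrder hℓ.ne')).mem_nhds hx)
  rw [← sub_eq_zero, nablaP_eq_covDeriv, nablaP_eq_covDeriv,
    covDeriv_comm_sub (differentiableAt_nablaPCoeff hℓ hε hx i)
      (differentiableAt_nablaPCoeff hℓ hε hx j) hfx,
    fderiv_nablaPCoeff_single hℓ hε hx hij, fderiv_nablaPCoeff_single hℓ hε hx hij.symm,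
    sum_pow_succ_mul_inv_sq_sub_comm hε.inv.pow_eq_one, sub_self, zero_mul]

/-- For `ε` a primitive `ℓ`-th root of unity and parameters `k, γ_p ∈ ℂ`, the
operators `∇'_i` commute on functions regular (here: twice continuously
differentiable) away from the hyperplanes `x_i = ε^p x_j` (`i ≠ j`) and
`x_i = 0`: `[∇'_i, ∇'_j] = 0` for `i ≠ j`. -/
theorem stmt_0 (n ℓ : ℕ) (hn : 0 < n) (hℓ : 0 < ℓ)
    (ε : ℂ) (hε : IsPrimitiveRoot ε ℓ) (k : ℂ) (γ : ℕ → ℂ)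
    (U : Set (Fin n → ℂ))
    (hU : U = {x | (∀ i, x i ≠ 0) ∧
      ∀ i j : Fin n, i ≠ j → ∀ p : ℕ, x i ≠ ε ^ p * x j})
    (f : (Fin n → ℂ) → ℂ) (hf : ContDiffOn ℂ 2 f U) :
    ∀ i j : Fin n, i ≠ j → ∀ x ∈ U,
      nablaP n ℓ ε k γ i (nablaP n ℓ ε k γ j f) x
        = nablaP n ℓ ε k γ j (nablaP n ℓ ε k γ i f) x :=
  stmt_0_general n ℓ hℓ ε hε k γ U hU f hf
end

section
/- Let φ: 𝒜 → ℬ be a functor between Artinian abelian ℂ-linear categories and P a projective generator of 𝒜 with Q = φ(P). Assume: (a) Q is a projective generator of ℬ; (b) φ is fully faithful on the full subcategory of projective objects of 𝒜; (c) every object of 𝒜 has finite projective dimension; (d) φ is right exact. Then φ is an equivalence of categories. -/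
/-!
Let `Pⁿ` denote finite direct sums of copies of `P`. Since objects are Noetherian and `P` is a
generator, every object `X` of `𝒜` is a quotient of some `Pⁿ` (take a map `Pⁿ ⟶ X` of maximal
image), hence the cokernel of a map `Pᵐ ⟶ Pⁿ`; likewise in `ℬ` with `Q`. The `Pⁿ` are projective,
so hypothesis (b) applies to them, and `φ` preserves these presentations by right exactness.
Projectivity of `Pⁿ` and `Qⁿ` then makes `Hom(Pⁿ, Y) → Hom(Qⁿ, φ Y)` bijective for every `Y`, and
from this full faithfulness of `φ` follows by presenting the source. Finally an object of `ℬ`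
presented as the cokernel of `d : Qᵐ ⟶ Qⁿ` is `φ (cokernel e)` for the preimage `e` of `d`.
-/

open CategoryTheory CategoryTheory.Limits

/-- `X` has projective dimension at most `n`: recursively, `X` is projective, or
there is an epimorphism `p : P ⟶ X` with `P` projective whose kernel has
projective dimension at most `n - 1`. -/
def PdimLE {C : Type*} [Category C] [Abelian C] : ℕ → C → Prop
  | 0, X => Projective X
  | n + 1, X => ∃ (P : C) (p : P ⟶ X), Projective P ∧ Epi p ∧ PdimLE n (kernel p)

open ZeroObject

namespace CategoryTheory

section FiniteCopower

variable {C : Type*} [Category C] [Preadditive C] [HasBinaryBiproducts C]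

inductive IsFiniteCopower (P : C) : C → Prop
  | self : IsFiniteCopower P P
  | of_isZero {Z : C} : IsZero Z → IsFiniteCopower P Z
  | biprod {A B : C} : IsFiniteCopower P A → IsFiniteCopower P B → IsFiniteCopower P (A ⊞ B)
  | of_iso {A B : C} : (A ≅ B) → IsFiniteCopower P A → IsFiniteCopower P B

namespace IsFiniteCopower

variable {P A : C}

theorem projective (hP : Projective P) (hA : IsFiniteCopower P A) : Projective A := by
  induction hA with
  | self => exact hP
  | of_isZero hZ => exact hZ.projective
  | biprod _ _ ihA ihB => infer_instance
  | of_iso e _ ih => exact Projective.of_iso e ih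

variable {D : Type*} [Category D] [Preadditive D] [HasBinaryBiproducts D]
  (φ : C ⥤ D) [φ.Additive]

theorem map (hA : IsFiniteCopower P A) : IsFiniteCopower (φ.obj P) (φ.obj A) := by
  have := preservesBinaryBiproducts_of_preservesBiproducts φ
  induction hA with
  | self => exact .self
  | of_isZero hZ => exact .of_isZero (φ.map_isZero hZ)
  | biprod _ _ ihA ihB => exact .of_iso (φ.mapBiprod _ _).symm (ihA.biprod ihB)
  | of_iso e _ ih => exact .of_iso (φ.mapIso e) ih

theorem exists_iso_map [HasZeroObject C] (P : C) {B : D} (hB : IsFiniteCopower (φ.obj P) B) :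
    ∃ A : C, IsFiniteCopower P A ∧ Nonempty (φ.obj A ≅ B) := by
  have := preservesBinaryBiproducts_of_preservesBiproducts φ
  induction hB with
  | self => exact ⟨P, .self, ⟨Iso.refl _⟩⟩
  | of_isZero hZ => exact ⟨0, .of_isZero (isZero_zero C), ⟨(φ.map_isZero (isZero_zero C)).iso hZ⟩⟩
  | biprod _ _ ih₁ ih₂ =>
    obtain ⟨A₁, h₁, ⟨e₁⟩⟩ := ih₁
    obtain ⟨A₂, h₂, ⟨e₂⟩⟩ := ih₂
    exact ⟨A₁ ⊞ A₂, h₁.biprod h₂, ⟨φ.mapBiprod _ _ ≪≫ biprod.mapIso e₁ e₂⟩⟩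
  | of_iso e _ ih =>
    obtain ⟨A, hA, ⟨e'⟩⟩ := ih
    exact ⟨A, hA, ⟨e' ≪≫ e⟩⟩

end IsFiniteCopower

end FiniteCopower

section Presentation

variable {C : Type*} [Category C] [Abelian C]

theorem comp_cokernel_π_eq_zero_of_imageSubobject_le {X Y Z : C} {f : X ⟶ Y} {g : Z ⟶ Y}
    (h : imageSubobject g ≤ imageSubobject f) : g ≫ cokernel.π f = 0 := by
  rw [← imageSubobject_arrow_comp g, ← Subobject.ofLE_arrow h, Category.assoc, Category.assoc,
    imageSubobject_arrow_comp_eq_zero (cokernel.condition f), comp_zero, comp_zero]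

/-- Take `f : A ⟶ X` from a finite copower with maximal image; the image of every `h : P ⟶ X`
lies below that of `[f, h] : A ⊞ P ⟶ X`, which is the image of `f`, so `h` kills the cokernel of
`f`. -/
theorem IsSeparator.exists_finiteCopower_epi {P : C} (hP : IsSeparator P) (X : C)
    [WellFoundedGT (Subobject X)] : ∃ (A : C) (p : A ⟶ X), IsFiniteCopower P A ∧ Epi p := by
  obtain ⟨_, hmax⟩ := exists_maximal_of_wellFoundedGT
    (fun m : Subobject X => ∃ (A : C) (f : A ⟶ X), IsFiniteCopower P A ∧ imageSubobject f = m)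
    ⟨_, 0, 0, .of_isZero (isZero_zero C), rfl⟩
  obtain ⟨A, f, hA, rfl⟩ := hmax.prop
  refine ⟨A, f, hA, Abelian.epi_of_cokernel_π_eq_zero _ (hP.def _ _ fun h => ?_)⟩
  have hsum : imageSubobject f = imageSubobject (biprod.desc f h) :=
    hmax.eq_of_le ⟨_, _, hA.biprod .self, rfl⟩
      (by simpa using imageSubobject_comp_le biprod.inl (biprod.desc f h))
  have hle : imageSubobject h ≤ imageSubobject f :=
    hsum ▸ by simpa using imageSubobject_comp_le biprod.inr (biprod.desc f h)
  rw [comp_cokernel_π_eq_zero_of_imageSubobject_le hle, comp_zero]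

theorem IsSeparator.exists_finiteCopower_presentation {P : C} (hP : IsSeparator P)
    [∀ X : C, WellFoundedGT (Subobject X)] (X : C) :
    ∃ (A B : C) (d : B ⟶ A) (p : A ⟶ X) (w : d ≫ p = 0), IsFiniteCopower P A ∧
      IsFiniteCopower P B ∧ Nonempty (IsColimit (CokernelCofork.ofπ p w)) := by
  obtain ⟨A, p, hA, _⟩ := hP.exists_finiteCopower_epi X
  obtain ⟨B, q, hB, _⟩ := hP.exists_finiteCopower_epi (kernel p)
  exact ⟨A, B, q ≫ kernel.ι p, p, by simp, hA, hB,
    ⟨isCokernelEpiComp (Abelian.epiIsCokernelOfKernel _ (kernelIsKernel p)) q rfl⟩⟩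

end Presentation

namespace Functor

variable {C D : Type*} [Category C] [Category D] (φ : C ⥤ D)

theorem map_injective_of_epi {A X : C} (p : A ⟶ X) [Epi p] (Y : C)
    (hA : Function.Injective (φ.map : (A ⟶ Y) → (φ.obj A ⟶ φ.obj Y))) :
    Function.Injective (φ.map : (X ⟶ Y) → (φ.obj X ⟶ φ.obj Y)) := fun a b hab =>
  (cancel_epi p).1 (hA (by simp only [map_comp, hab]))

variable [Abelian C] [Abelian D]

section Cokernel

variable {A B X : C} {d : B ⟶ A} {p : A ⟶ X} {w : d ≫ p = 0}
  (hc : IsColimit (CokernelCofork.ofπ p w)) [PreservesColimit (parallelPair d 0) φ]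
include hc

theorem map_surjective_of_isCokernel [φ.PreservesZeroMorphisms] (Y : C)
    (hB : Function.Injective (φ.map : (B ⟶ Y) → (φ.obj B ⟶ φ.obj Y)))
    (hA : Function.Surjective (φ.map : (A ⟶ Y) → (φ.obj A ⟶ φ.obj Y))) :
    Function.Surjective (φ.map : (X ⟶ Y) → (φ.obj X ⟶ φ.obj Y)) := by
  intro v
  have : Epi (φ.map p) := Cofork.IsColimit.epi (isColimitCoforkMapOfIsColimit' φ w hc)
  obtain ⟨g, hg⟩ := hA (φ.map p ≫ v)
  have hdg : d ≫ g = 0 := hB (by rw [map_comp, hg, ← map_comp_assoc, w]; simp)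
  obtain ⟨e, he⟩ := CokernelCofork.IsColimit.desc' hc g hdg
  exact ⟨e, (cancel_epi (φ.map p)).1 (by rw [← map_comp, ← hg]; exact congrArg φ.map he)⟩

/-- A four-lemma argument: as `T` and `φ T` are projective, `Hom(T, -)` and `Hom(φ T, -)` are right
exact on `B ⟶ A ⟶ X ⟶ 0` and on its image under `φ`, which is again a cokernel sequence. -/
theorem map_bijective_of_isCokernel [φ.Additive] (T : C) [Projective T] [Projective (φ.obj T)]
    (hA : Function.Bijective (φ.map : (T ⟶ A) → (φ.obj T ⟶ φ.obj A)))
    (hB : Function.Surjective (φ.map : (T ⟶ B) → (φ.obj T ⟶ φ.obj B))) :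
    Function.Bijective (φ.map : (T ⟶ X) → (φ.obj T ⟶ φ.obj X)) := by
  have hφc := isColimitCoforkMapOfIsColimit' φ w hc
  have : Epi p := Cofork.IsColimit.epi hc
  have : Epi (φ.map p) := Cofork.IsColimit.epi hφc
  refine ⟨(injective_iff_map_eq_zero φ.mapAddHom).2 fun f hf => ?_, fun v => ?_⟩
  · let S := ShortComplex.mk (φ.map d) (φ.map p) (by rw [← map_comp, w, φ.map_zero])
    have hg : φ.map (Projective.factorThru f p) ≫ S.g = 0 := by
      rw [← map_comp, Projective.factorThru_comp]; exact hf
    have hS : S.Exact := S.exact_of_g_is_cokernel hφc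
    obtain ⟨u, hu⟩ := hB (hS.liftFromProjective _ hg)
    have hud : u ≫ d = Projective.factorThru f p :=
      hA.1 (by rw [map_comp, hu]; exact hS.liftFromProjective_comp _ hg)
    rw [← Projective.factorThru_comp f p, ← hud, Category.assoc, w, comp_zero]
  · obtain ⟨g, hg⟩ := hA.2 (Projective.factorThru v (φ.map p))
    exact ⟨g ≫ p, by simp [hg]⟩

end Cokernel

variable [φ.Additive] [PreservesFiniteColimits φ] {P : C}

section Source

variable [∀ X : C, WellFoundedGT (Subobject X)] (hP : Projective P) (hPsep : IsSeparator P)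
  (hQ : Projective (φ.obj P))
  (hff : ∀ X Y : C, IsFiniteCopower P X → IsFiniteCopower P Y →
    Function.Bijective (φ.map : (X ⟶ Y) → (φ.obj X ⟶ φ.obj Y)))
include hP hPsep hQ hff

theorem map_bijective_of_isFiniteCopower {T : C} (hT : IsFiniteCopower P T) (Y : C) :
    Function.Bijective (φ.map : (T ⟶ Y) → (φ.obj T ⟶ φ.obj Y)) := by
  obtain ⟨A, B, d, p, w, hA, hB, ⟨hc⟩⟩ := hPsep.exists_finiteCopower_presentation Y
  have := hT.projective hP
  have := (hT.map φ).projective hQ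
  exact φ.map_bijective_of_isCokernel hc T (hff T A hT hA) (hff T B hT hB).2

theorem faithful_of_map_bijective_of_isFiniteCopower : φ.Faithful where
  map_injective {X Y} := by
    obtain ⟨A, p, hA, _⟩ := hPsep.exists_finiteCopower_epi X
    exact φ.map_injective_of_epi p Y (φ.map_bijective_of_isFiniteCopower hP hPsep hQ hff hA Y).1

theorem full_of_map_bijective_of_isFiniteCopower : φ.Full where
  map_surjective {X Y} := by
    obtain ⟨A, B, d, p, w, hA, hB, ⟨hc⟩⟩ := hPsep.exists_finiteCopower_presentation X
    exact φ.map_surjective_of_isCokernel hc Y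
      (φ.map_bijective_of_isFiniteCopower hP hPsep hQ hff hB Y).1
      (φ.map_bijective_of_isFiniteCopower hP hPsep hQ hff hA Y).2

end Source

theorem essSurj_of_map_surjective_of_isFiniteCopower [∀ Y : D, WellFoundedGT (Subobject Y)]
    (hQsep : IsSeparator (φ.obj P))
    (hff : ∀ X Y : C, IsFiniteCopower P X → IsFiniteCopower P Y →
      Function.Surjective (φ.map : (X ⟶ Y) → (φ.obj X ⟶ φ.obj Y))) : φ.EssSurj where
  mem_essImage Y := by
    obtain ⟨A', B', d, p, w, hA', hB', ⟨hc⟩⟩ := hQsep.exists_finiteCopower_presentation Y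
    obtain ⟨A, hA, ⟨α⟩⟩ := hA'.exists_iso_map φ P
    obtain ⟨B, hB, ⟨β⟩⟩ := hB'.exists_iso_map φ P
    obtain ⟨e, he⟩ := hff B A hB hA (β.hom ≫ d ≫ α.inv)
    exact ⟨cokernel e, ⟨PreservesCokernel.iso φ e ≪≫ cokernel.mapIso _ d β α (by simp [he]) ≪≫
      (hc.coconePointUniqueUpToIso (cokernelIsCokernel d)).symm⟩⟩

end Functor

end CategoryTheory

theorem stmt_8_general {CA CB : Type*}
    [Category CA] [Abelian CA]
    [Category CB] [Abelian CB]
    -- Artinian: finite-dimensional Hom spaces and all objects of finite length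
    (hLenA : ∀ X : CA, WellFoundedLT (Subobject X) ∧ WellFoundedGT (Subobject X))
    (hLenB : ∀ X : CB, WellFoundedLT (Subobject X) ∧ WellFoundedGT (Subobject X))
    (φ : CA ⥤ CB)
    -- (d) φ is right exact
    [φ.Additive] [PreservesFiniteColimits φ]
    (P : CA) (hP : Projective P) (hPgen : IsSeparator P)
    -- (a) Q = φ(P) is a projective generator of ℬ
    (hQ : Projective (φ.obj P)) (hQgen : IsSeparator (φ.obj P))
    -- (b) φ is fully faithful on projective objects
    (hff : ∀ X Y : CA, Projective X → Projective Y →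
      Function.Bijective (fun f : X ⟶ Y => φ.map f)) :
    φ.IsEquivalence := by
  have := fun X => (hLenA X).2
  have := fun Y => (hLenB Y).2
  have hff' : ∀ X Y : CA, IsFiniteCopower P X → IsFiniteCopower P Y →
      Function.Bijective (φ.map : (X ⟶ Y) → (φ.obj X ⟶ φ.obj Y)) :=
    fun X Y hX hY => hff X Y (hX.projective hP) (hY.projective hP)
  have := φ.faithful_of_map_bijective_of_isFiniteCopower hP hPgen hQ hff'
  have := φ.full_of_map_bijective_of_isFiniteCopower hP hPgen hQ hff'
  have := φ.essSurj_of_map_surjective_of_isFiniteCopower hQgen fun X Y hX hY => (hff' X Y hX hY).2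
  exact { }

/-- Lemma A.5.3: let `φ : 𝒜 → ℬ` be a functor of Artinian abelian `ℂ`-linear
categories and `P` a projective generator of `𝒜`, `Q = φ(P)`.  If (a) `Q` is a
projective generator of `ℬ`, (b) `φ` is fully faithful on projectives, (c)
every object of `𝒜` has finite projective dimension, and (d) `φ` is right
exact, then `φ` is an equivalence of categories. -/
theorem stmt_8 {CA CB : Type*}
    [Category CA] [Abelian CA] [Linear ℂ CA]
    [Category CB] [Abelian CB] [Linear ℂ CB]
    -- Artinian: finite-dimensional Hom spaces and all objects of finite length
    (hArtA : ∀ X Y : CA, FiniteDimensional ℂ (X ⟶ Y))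
    (hLenA : ∀ X : CA, WellFoundedLT (Subobject X) ∧ WellFoundedGT (Subobject X))
    (hArtB : ∀ X Y : CB, FiniteDimensional ℂ (X ⟶ Y))
    (hLenB : ∀ X : CB, WellFoundedLT (Subobject X) ∧ WellFoundedGT (Subobject X))
    (φ : CA ⥤ CB)
    -- (d) φ is right exact
    [φ.Additive] [PreservesFiniteColimits φ]
    (P : CA) (hP : Projective P) (hPgen : IsSeparator P)
    -- (a) Q = φ(P) is a projective generator of ℬ
    (hQ : Projective (φ.obj P)) (hQgen : IsSeparator (φ.obj P))
    -- (b) φ is fully faithful on projective objects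
    (hff : ∀ X Y : CA, Projective X → Projective Y →
      Function.Bijective (fun f : X ⟶ Y => φ.map f))
    -- (c) 𝒜 has finite projective dimension
    (hpd : ∀ X : CA, ∃ n, PdimLE n X) :
    φ.IsEquivalence :=
  stmt_8_general hLenA hLenB φ P hP hPgen hQ hQgen hff
end

section
/- Fix integers m, ℓ > 0, e > 1, κ = −e, a composition s ∈ 𝒞_{m,ℓ}, and set π + ρ = (s_1, s_1−1, …, 1, s_2, s_2−1, …, 1, …, s_ℓ, …, 1) ∈ ℤ^m. Suppose μ + π ⊴ λ + π in the partial order ⊴ generated by λ' = (s_α • μ')_+ < μ' for real affine roots α ∉ Π_s with ⟨μ' + ρ̂, α⟩ ∈ ℤ_{>0}, where λ ∈ 𝒫_{n,s} (all entries of λ are ≥ 0, s-dominant, with |λ| = n) and μ ∈ ℤ^s_{≥0} is s-dominant integral. Then μ ∈ 𝒫_{n,s}, i.e., all entries of μ are nonnegative. -/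
noncomputable section

/-- The affine weight space `t* = ℂδ ⊕ ℂ^m ⊕ ℂω₀`. -/
abbrev AffWt (m : ℕ) := ℂ × (Fin m → ℂ) × ℂ

/-- The standard bilinear form on `t*`. -/
def affForm (m : ℕ) (v w : AffWt m) : ℂ :=
  v.1 * w.2.2 + w.1 * v.2.2 + ∑ i, v.2.1 i * w.2.1 i

/-- The real affine root `εᵢ - εⱼ + nδ`. -/
def rootVec (m : ℕ) (i j : Fin m) (n : ℤ) : AffWt m :=
  ((n : ℂ), Pi.single i 1 - Pi.single j 1, 0)

/-- The reflection `s_α(v) = v - ⟨v, α⟩ α` in the real root `α = εᵢ - εⱼ + nδ`. -/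
def reflRoot (m : ℕ) (i j : Fin m) (n : ℤ) (v : AffWt m) : AffWt m :=
  v - affForm m v (rootVec m i j n) • rootVec m i j n

/-- `ρ̂ = ρ + m ω₀`, `ρ = (m,…,1)`. -/
def rhoHat (m : ℕ) : AffWt m := (0, fun i => (m : ℂ) - (i : ℕ), (m : ℂ))

/-- Action of `w ∈ S_m` on `t*`. -/
def permAct (m : ℕ) (w : Equiv.Perm (Fin m)) (v : AffWt m) : AffWt m :=
  (v.1, fun i => v.2.1 (w⁻¹ i), v.2.2)

/-- Dot action of the reflection `s_α`, `α = εᵢ - εⱼ + nδ`. -/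
def dotRefl (m : ℕ) (i j : Fin m) (n : ℤ) (v : AffWt m) : AffWt m :=
  reflRoot m i j n (v + rhoHat m) - rhoHat m

/-- Dot action of `w ∈ S_m`. -/
def dotPerm (m : ℕ) (w : Equiv.Perm (Fin m)) (v : AffWt m) : AffWt m :=
  permAct m w (v + rhoHat m) - rhoHat m

variable (m ℓ : ℕ) (s : Fin ℓ → ℕ)

def blockStart (p : Fin ℓ) : ℕ := ∑ q ∈ Finset.univ.filter (· < p), s q

def inBlock (p : Fin ℓ) (j : Fin m) : Prop :=
  blockStart ℓ s p ≤ (j : ℕ) ∧ (j : ℕ) < blockStart ℓ s p + s p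

def sameBlock (i j : Fin m) : Prop :=
  ∃ p : Fin ℓ, inBlock m ℓ s p i ∧ inBlock m ℓ s p j

/-- A permutation lying in `S_s` (preserving each block). -/
def blockPerm (w : Equiv.Perm (Fin m)) : Prop :=
  ∀ (p : Fin ℓ) (j : Fin m), inBlock m ℓ s p j → inBlock m ℓ s p (w j)

/-- `s`-dominance of an affine weight: `⟨v, αᵢ⟩ ∈ ℕ` for simple roots of `Π_s`. -/
def sDomAff (v : AffWt m) : Prop :=
  ∀ i j : Fin m, (i : ℕ) + 1 = (j : ℕ) → sameBlock m ℓ s i j →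
    ∃ k : ℕ, v.2.1 i - v.2.1 j = (k : ℂ)

/-- The affine simple roots `α₁,…,α_{m-1}, α₀` (with `α₀ = δ - ε₁ + ε_m`). -/
def aSimple (i : Fin m) : AffWt m :=
  if h : (i : ℕ) + 1 < m then rootVec m i ⟨(i : ℕ) + 1, h⟩ 0
  else ((1 : ℂ), Pi.single i 1 - Pi.single ⟨0, i.pos⟩ 1, 0)

/-- The order on `t*`: `v ≤ v'` iff `v' - v ∈ ℕ Π̂⁺`. -/
def leAff (v v' : AffWt m) : Prop :=
  ∃ cc : Fin m → ℕ, v' = v + ∑ i, (cc i : ℂ) • aSimple m i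

/-- One step of the order `⊴` of 5.2(b), going down from `hi` to `lo`:
`lo = (s_α • hi)_+ < hi` for a real affine root `α = εᵢ - εⱼ + nδ ∉ Π_s` with
`⟨hi + ρ̂, α⟩ ∈ ℤ_{>0}` and `s_α • hi + ρ̂` `s`-regular; `(·)_+` denotes the
`S_s`-dot-conjugate which is `s`-dominant. -/
def StepDown (hi lo : AffWt m) : Prop :=
  ∃ (i j : Fin m) (n : ℤ), i ≠ j ∧ ¬(sameBlock m ℓ s i j ∧ n = 0) ∧
    (∃ k : ℕ, 0 < k ∧ affForm m (hi + rhoHat m) (rootVec m i j n) = (k : ℂ)) ∧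
    (∀ a b : Fin m, a ≠ b → sameBlock m ℓ s a b →
      affForm m (dotRefl m i j n hi + rhoHat m) (rootVec m a b 0) ≠ 0) ∧
    (∃ w : Equiv.Perm (Fin m), blockPerm m ℓ s w ∧
      lo = dotPerm m w (dotRefl m i j n hi)) ∧
    sDomAff m ℓ s lo ∧ leAff m lo hi ∧ lo ≠ hi

end

/-! Write `λ̄ = v + ρ̂` for an affine weight `v` of level `κ - m`, `κ = -e`. Along every step of `⊴`
the entries of `λ̄` stay positive integers. The dot action of `s_α`, `α = εᵢ - εⱼ + nδ`, replaces
`(λ̄ᵢ, λ̄ⱼ)` by `(λ̄ⱼ + ne, λ̄ⱼ + k)` with `k = ⟨λ̄, α⟩ > 0`, and `n ≥ 0` because the step goes down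
in the order, so the `δ`-coefficient `kn` of the difference is a natural number; `S_s` then only
permutes the entries. For `v = ~(μ + π)` the last entry of each block of `λ̄` is `μₜ + 1`, so
`μₜ ≥ 0` there, and `s`-dominance propagates this to the whole block. -/

open Finset Relation

section Blocks

variable {m ℓ : ℕ} {s : Fin ℓ → ℕ}

lemma blockStart_eq_sum_Iio (p : Fin ℓ) : blockStart ℓ s p = ∑ q ∈ Iio p, s q := by
  rw [blockStart, filter_gt_eq_Iio]

lemma blockStart_add_self (p : Fin ℓ) : blockStart ℓ s p + s p = ∑ q ∈ Iic p, s q := by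
  rw [blockStart_eq_sum_Iio, ← Iio_insert, sum_insert notMem_Iio_self, add_comm]

lemma blockStart_add_self_le_sum (p : Fin ℓ) : blockStart ℓ s p + s p ≤ ∑ q, s q := by
  rw [blockStart_add_self]
  exact sum_le_sum_of_subset (subset_univ _)

lemma blockStart_succ {t : ℕ} (h : t + 1 < ℓ) :
    blockStart ℓ s ⟨t + 1, h⟩ = blockStart ℓ s ⟨t, by omega⟩ + s ⟨t, by omega⟩ := by
  rw [blockStart_add_self, blockStart_eq_sum_Iio]
  congr 1
  ext q
  simp only [mem_Iio, mem_Iic, Fin.lt_def, Fin.le_def]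
  omega

lemma exists_inBlock (hs : ∑ p, s p = m) (j : Fin m) : ∃ p, inBlock m ℓ s p j := by
  obtain ⟨k, rfl⟩ : ∃ k, ℓ = k + 1 := Nat.exists_eq_add_one.mpr <|
    Nat.pos_of_ne_zero fun h => by subst h; simp only [univ_eq_empty, sum_empty] at hs; subst hs; exact j.elim0
  suffices H : ∀ t (ht : t < k + 1), (j : ℕ) < blockStart _ s ⟨t, ht⟩ + s ⟨t, ht⟩ →
      ∃ p, inBlock m _ s p j by
    refine H k (by omega) ?_
    rw [blockStart_add_self, show Iic _ = univ from eq_univ_of_forall fun q => mem_Iic.2 q.le_last,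
      hs]
    exact j.isLt
  intro t
  induction t with
  | zero =>
    intro ht hj
    exact ⟨⟨0, ht⟩, by simp [blockStart], hj⟩
  | succ t ih =>
    intro ht hj
    by_cases hstart : blockStart _ s ⟨t + 1, ht⟩ ≤ j
    · exact ⟨_, hstart, hj⟩
    · rw [blockStart_succ] at hstart
      exact ih (by omega) (by omega)

variable {f : Fin m → ℤ}

lemma le_of_inBlock_of_le
    (hf : ∀ i j : Fin m, (i : ℕ) + 1 = (j : ℕ) → sameBlock m ℓ s i j → f j ≤ f i)
    {p : Fin ℓ} {i j : Fin m} (hi : inBlock m ℓ s p i) (hj : inBlock m ℓ s p j) (hij : i ≤ j) :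
    f j ≤ f i := by
  suffices H : ∀ k, (i : ℕ) ≤ k → ∀ hk : k < m, inBlock m ℓ s p ⟨k, hk⟩ → f ⟨k, hk⟩ ≤ f i from
    H j hij j.isLt hj
  intro k hik
  induction k, hik using Nat.le_induction with
  | base => exact fun _ _ => le_rfl
  | succ k hik ih =>
    intro hk hkb
    have hkb' : inBlock m ℓ s p ⟨k, by omega⟩ := ⟨hi.1.trans hik, (Nat.lt_succ_self k).trans hkb.2⟩
    exact (hf ⟨k, _⟩ ⟨k + 1, hk⟩ rfl ⟨p, hkb', hkb⟩).trans (ih _ hkb')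

lemma nonneg_of_lt_add_blockStart (hs : ∑ p, s p = m)
    (hf : ∀ i j : Fin m, (i : ℕ) + 1 = (j : ℕ) → sameBlock m ℓ s i j → f j ≤ f i)
    (hpos : ∀ p t, inBlock m ℓ s p t → 0 < f t + s p + blockStart ℓ s p - (t : ℕ)) (t : Fin m) :
    0 ≤ f t := by
  obtain ⟨p, ht⟩ := exists_inBlock hs t
  have hend := blockStart_add_self_le_sum (s := s) p
  have ⟨ht_start, ht_lt⟩ := ht
  let last : Fin m := ⟨blockStart ℓ s p + s p - 1, by omega⟩
  have hlast_val : (last : ℕ) = blockStart ℓ s p + s p - 1 := rfl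
  have hlast : inBlock m ℓ s p last := ⟨by omega, by omega⟩
  have hle := le_of_inBlock_of_le hf ht hlast (Fin.le_def.2 (by omega))
  have := hpos p last hlast
  omega

end Blocks

def IsPosNat (z : ℂ) : Prop := ∃ k : ℕ, 0 < k ∧ z = k

lemma IsPosNat.add_natCast {z : ℂ} (hz : IsPosNat z) (n : ℕ) : IsPosNat (z + n) := by
  obtain ⟨k, hk, rfl⟩ := hz
  exact ⟨k + n, by omega, by push_cast; ring⟩

lemma isPosNat_intCast_iff {a : ℤ} : IsPosNat a ↔ 0 < a := by
  constructor
  · rintro ⟨k, hk, h⟩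
    have : a = k := by exact_mod_cast h
    omega
  · intro ha
    exact ⟨a.toNat, by omega, by exact_mod_cast (Int.toNat_of_nonneg ha.le).symm⟩

section Reflection

variable {m : ℕ} {i j : Fin m} {n : ℤ} {u v : AffWt m}

lemma affForm_rootVec : affForm m u (rootVec m i j n) = n * u.2.2 + u.2.1 i - u.2.1 j := by
  simp only [affForm, rootVec, mul_zero, zero_add, Pi.sub_apply, Pi.single_apply, mul_sub, mul_ite,
    mul_one, sum_sub_distrib, sum_ite_eq', mem_univ, ↓reduceIte]
  ring

lemma reflRoot_fst : (reflRoot m i j n u).1 = u.1 - affForm m u (rootVec m i j n) * n := by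
  simp [reflRoot, rootVec]

lemma reflRoot_snd_snd : (reflRoot m i j n u).2.2 = u.2.2 := by
  simp [reflRoot, rootVec]

lemma reflRoot_snd_fst_apply (t : Fin m) :
    (reflRoot m i j n u).2.1 t =
      u.2.1 t - affForm m u (rootVec m i j n) * (Pi.single i 1 - Pi.single j 1 : Fin m → ℂ) t := by
  simp [reflRoot, rootVec]

lemma dotRefl_add_rhoHat : dotRefl m i j n v + rhoHat m = reflRoot m i j n (v + rhoHat m) :=
  sub_add_cancel _ _

lemma dotPerm_add_rhoHat (w : Equiv.Perm (Fin m)) :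
    dotPerm m w v + rhoHat m = permAct m w (v + rhoHat m) :=
  sub_add_cancel _ _

lemma aSimple_fst (a : Fin m) : (aSimple m a).1 = ((if (a : ℕ) + 1 < m then 0 else 1 : ℕ) : ℂ) := by
  unfold aSimple
  split_ifs <;> simp [rootVec]

lemma leAff.exists_fst_eq {v' : AffWt m} (h : leAff m v v') : ∃ N : ℕ, v'.1 = v.1 + N := by
  obtain ⟨cc, rfl⟩ := h
  refine ⟨∑ a, cc a * if (a : ℕ) + 1 < m then 0 else 1, ?_⟩
  simp only [Prod.fst_add, Prod.fst_sum, Prod.smul_fst, smul_eq_mul, aSimple_fst]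
  push_cast
  rfl

lemma isPosNat_reflRoot_apply {e N k : ℕ} (hij : i ≠ j) (hlevel : u.2.2 = -e)
    (hu : ∀ t, IsPosNat (u.2.1 t)) (hk : affForm m u (rootVec m i j N) = k) (t : Fin m) :
    IsPosNat ((reflRoot m i j N u).2.1 t) := by
  rw [reflRoot_snd_fst_apply, hk]
  rw [affForm_rootVec, hlevel] at hk
  rcases eq_or_ne t i with rfl | hti
  · have hshift : u.2.1 t - k = u.2.1 j + (N * e : ℕ) := by
      push_cast at hk ⊢
      linear_combination hk
    simpa [hij, hshift] using (hu j).add_natCast (N * e)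
  rcases eq_or_ne t j with rfl | htj
  · simpa [hij, sub_eq_add_neg] using (hu t).add_natCast k
  · simpa [hti, htj] using hu t

end Reflection

section Chain

variable {m ℓ : ℕ} {s : Fin ℓ → ℕ} {hi lo : AffWt m}

def BarPosNat (v : AffWt m) : Prop := ∀ t, IsPosNat ((v + rhoHat m).2.1 t)

lemma StepDown.snd_snd_eq (h : StepDown m ℓ s hi lo) : lo.2.2 = hi.2.2 := by
  obtain ⟨i, j, n, -, -, -, -, ⟨w, -, rfl⟩, -⟩ := h
  have := congrArg (·.2.2) (dotPerm_add_rhoHat (v := dotRefl m i j n hi) w)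
  simp only [dotRefl_add_rhoHat, permAct, reflRoot_snd_snd, Prod.snd_add] at this
  exact add_right_cancel this

lemma StepDown.barPosNat {e : ℕ} (h : StepDown m ℓ s hi lo) (hlevel : hi.2.2 + m = -e)
    (hhi : BarPosNat hi) : BarPosNat lo := by
  obtain ⟨i, j, n, hij, -, ⟨k, hk, hform⟩, -, ⟨w, -, rfl⟩, -, hle, -⟩ := h
  have hbar : dotPerm m w (dotRefl m i j n hi) + rhoHat m =
      permAct m w (reflRoot m i j n (hi + rhoHat m)) := by
    rw [dotPerm_add_rhoHat, dotRefl_add_rhoHat]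
  have hδ : (dotPerm m w (dotRefl m i j n hi)).1 = hi.1 - k * n := by
    have := congrArg Prod.fst hbar
    simp only [permAct, reflRoot_fst, hform] at this
    simpa [rhoHat] using this
  obtain ⟨N, hN⟩ := hle.exists_fst_eq
  have hkn : (k : ℤ) * n = N := by
    rw [hδ] at hN
    exact_mod_cast (by linear_combination hN : (k : ℂ) * n = N)
  lift n to ℕ using nonneg_of_mul_nonneg_right (hkn ▸ Int.natCast_nonneg N) (by exact_mod_cast hk)
  intro t
  rw [hbar]
  exact isPosNat_reflRoot_apply hij (by simpa [rhoHat] using hlevel) hhi hform (w⁻¹ t)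

lemma Relation.ReflTransGen.barPosNat_stepDown {e : ℕ} {c : ℂ} (hc : c + m = -e)
    (h : ReflTransGen (StepDown m ℓ s) hi lo) (hlevel : hi.2.2 = c) (hhi : BarPosNat hi) :
    BarPosNat lo := by
  suffices lo.2.2 = c ∧ BarPosNat lo from this.2
  induction h with
  | refl => exact ⟨hlevel, hhi⟩
  | tail _ hstep ih => exact ⟨hstep.snd_snd_eq.trans ih.1, hstep.barPosNat (by rw [ih.1, hc]) ih.2⟩

end Chain

lemma isPosNat_add_pi_iff {m ℓ : ℕ} {s : Fin ℓ → ℕ} {π : Fin m → ℂ}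
    (hπ : ∀ (p : Fin ℓ) (j : Fin m), inBlock m ℓ s p j →
      π j + ((m : ℂ) - (j : ℕ)) = (s p : ℂ) - (((j : ℕ) - blockStart ℓ s p : ℕ) : ℂ))
    {p : Fin ℓ} {t : Fin m} (ht : inBlock m ℓ s p t) (a : ℤ) :
    IsPosNat ((a : ℂ) + π t + ((m : ℂ) - (t : ℕ))) ↔ 0 < a + s p + blockStart ℓ s p - (t : ℕ) := by
  have hπt := hπ p t ht
  rw [Nat.cast_sub ht.1] at hπt
  rw [← isPosNat_intCast_iff]
  push_cast
  rw [show (a : ℂ) + π t + ((m : ℂ) - (t : ℕ)) = a + s p + blockStart ℓ s p - (t : ℕ) by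
    linear_combination hπt]

theorem stmt_11_general (m ℓ e : ℕ)
    (s : Fin ℓ → ℕ) (hs : ∑ p, s p = m)
    (κ : ℂ) (hκ : κ = -(e : ℂ)) (c : ℂ) (hc : c = κ - m)
    (π : Fin m → ℂ)
    (hπ : ∀ (p : Fin ℓ) (j : Fin m), inBlock m ℓ s p j →
      π j + ((m : ℂ) - (j : ℕ)) = (s p : ℂ) - (((j : ℕ) - blockStart ℓ s p : ℕ) : ℂ))
    (tilde : (Fin m → ℂ) → AffWt m)
    (htilde : ∀ v : Fin m → ℂ,
      tilde v = (-(∑ i, v i * (2 * ((m : ℂ) - (i : ℕ)) + v i)) / (2 * κ), v, c))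
    (lam mu : Fin m → ℤ)
    (hlampos : ∀ j, 0 ≤ lam j)
    (hmudom : ∀ i j : Fin m, (i : ℕ) + 1 = (j : ℕ) → sameBlock m ℓ s i j →
      mu j ≤ mu i)
    (hrel : Relation.ReflTransGen (StepDown m ℓ s)
      (tilde fun j => (lam j : ℂ) + π j) (tilde fun j => (mu j : ℂ) + π j)) :
    ∀ j, 0 ≤ mu j := by
  have hbar_iff : ∀ (f : Fin m → ℤ) p t, inBlock m ℓ s p t →
      (IsPosNat ((tilde (fun j => (f j : ℂ) + π j) + rhoHat m).2.1 t) ↔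
        0 < f t + s p + blockStart ℓ s p - (t : ℕ)) := by
    intro f p t ht
    rw [htilde]
    exact isPosNat_add_pi_iff hπ ht (f t)
  have hlam : BarPosNat (tilde fun j => (lam j : ℂ) + π j) := by
    intro t
    obtain ⟨p, ht⟩ := exists_inBlock hs t
    exact (hbar_iff lam p t ht).2 (by have := ht.2; have := hlampos t; omega)
  have hmu : BarPosNat (tilde fun j => (mu j : ℂ) + π j) :=
    hrel.barPosNat_stepDown (e := e) (c := c) (by rw [hc, hκ]; ring) (by rw [htilde]) hlam
  exact nonneg_of_lt_add_blockStart hs hmudom fun p t ht => (hbar_iff mu p t ht).1 (hmu t)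

/-- Proposition A.6.1: fix `m, ℓ > 0`, `e > 1`, `κ = -e`, `c = κ - m`, a
composition `s ∈ 𝒞_{m,ℓ}` and `π` with
`π + ρ = (s_1, s_1-1, …, 1, …, s_ℓ, …, 1)`.  If `λ ∈ 𝒫_{n,s}` (nonnegative,
`s`-dominant, `|λ| = n`), `μ ∈ ℤ^s_{≥0}` is `s`-dominant integral, and
`μ + π ⊴ λ + π` for the order `⊴` generated by the steps
`(s_α • μ')_+ < μ'` (for real affine roots `α ∉ Π_s` with
`⟨μ' + ρ̂, α⟩ ∈ ℤ_{>0}`), applied to the weights `~(λ+π)`, `~(μ+π)` of level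
`c` (where `~v = v̂ + z_v δ`, `z_v = -⟨v, 2ρ+v⟩/2κ`), then all entries of `μ`
are nonnegative, i.e. `μ ∈ 𝒫_{n,s}`. -/
theorem stmt_11 (m ℓ e n : ℕ) (hm : 0 < m) (hℓ : 0 < ℓ) (he : 1 < e)
    (s : Fin ℓ → ℕ) (hs : ∑ p, s p = m)
    (κ : ℂ) (hκ : κ = -(e : ℂ)) (c : ℂ) (hc : c = κ - m)
    (π : Fin m → ℂ)
    (hπ : ∀ (p : Fin ℓ) (j : Fin m), inBlock m ℓ s p j →
      π j + ((m : ℂ) - (j : ℕ)) = (s p : ℂ) - (((j : ℕ) - blockStart ℓ s p : ℕ) : ℂ))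
    (tilde : (Fin m → ℂ) → AffWt m)
    (htilde : ∀ v : Fin m → ℂ,
      tilde v = (-(∑ i, v i * (2 * ((m : ℂ) - (i : ℕ)) + v i)) / (2 * κ), v, c))
    (lam mu : Fin m → ℤ)
    (hlamdom : ∀ i j : Fin m, (i : ℕ) + 1 = (j : ℕ) → sameBlock m ℓ s i j →
      lam j ≤ lam i)
    (hlampos : ∀ j, 0 ≤ lam j)
    (hlamn : ∑ j, lam j = (n : ℤ))
    (hmudom : ∀ i j : Fin m, (i : ℕ) + 1 = (j : ℕ) → sameBlock m ℓ s i j →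
      mu j ≤ mu i)
    (hrel : Relation.ReflTransGen (StepDown m ℓ s)
      (tilde fun j => (lam j : ℂ) + π j) (tilde fun j => (mu j : ℂ) + π j)) :
    ∀ j, 0 ≤ mu j :=
  stmt_11_general m ℓ e s hs κ hκ c hc π hπ tilde htilde lam mu hlampos hmudom hrel
end

section
/- For each integer a, write a = c_a + e(p_a − 1) + eℓ r_a with c_a ∈ {1,…,e} (representing ℤ/eℤ), p_a ∈ {1,…,ℓ}, r_a ∈ ℤ, and set φ_a = c_a + e·r_a. Then the assignment α̲ = (a_1 > a_2 > ⋯ > a_m) ↦ (α, ν), where ν ∈ 𝒞_{m,ℓ} records the multiset of values p_{a_i}, and α = (φ_{a_{w(1)}},…,φ_{a_{w(m)}}) with w ∈ S_m minimal such that (p_{a_{w(1)}},…,p_{a_{w(m)}}) = (ℓ^{ν_ℓ},…,2^{ν_2},1^{ν_1}), defines a bijection from the set of strictly decreasing m-tuples of integers onto the disjoint union over compositions ν of m with ℓ parts of the sets ℤ^{ν°}_{>0} × {ν}, where ℤ^{ν°}_{>0} is the set of tuples strictly decreasing within each block of the reversed composition ν° = (ν_ℓ,…,ν_1). -/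
/-!
The map `a ↦ (p_a, φ_a)` is a bijection `ℤ → {1,…,ℓ} × ℤ` (inverse `ofPPhi`) which is strictly
increasing in `φ` on each fibre `p = const`. A strictly decreasing `m`-tuple `a` therefore splits
into its `ℓ` classes `{aᵢ | p_{aᵢ} = p}`; applying `φ` to each class, listed in decreasing order,
gives strictly decreasing blocks of lengths `ν_p`, and their concatenation (for `p = ℓ, …, 1`) is
`α`. Conversely, cutting `α` into blocks of sizes `ν° = (ν_ℓ, …, ν_1)`, mapping the block of
class `p` back by `ofPPhi p` and sorting the union decreasingly recovers `a`.
-/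

open scoped Classical

section
variable (e ℓ : ℕ)

/-- For `a ∈ ℤ` written as `a = c_a + e(p_a - 1) + eℓ r_a` with `c_a ∈ {1,…,e}`,
`p_a ∈ {1,…,ℓ}`, `r_a ∈ ℤ`: the component `p_a` (1-based). -/
def pOf (a : ℤ) : ℕ := (((a - 1).emod ((e : ℤ) * ℓ)).toNat / e) + 1

/-- `φ_a = c_a + e·r_a`. -/
def phiOf (a : ℤ) : ℤ := ((a - 1).emod e + 1) + (e : ℤ) * ((a - 1).ediv ((e : ℤ) * ℓ))

variable (m : ℕ)

/-- `ν_p` records the number of entries of the tuple with `p`-component `p+1`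
(0-based `p`). -/
def nuOf (a : Fin m → ℤ) (p : Fin ℓ) : ℕ :=
  (Finset.univ.filter fun i : Fin m => pOf e ℓ (a i) = (p : ℕ) + 1).card

/-- The concatenated list of `φ`-values, blocks ordered by decreasing `p`
(`p = ℓ, ℓ-1, …, 1`), within each block in the original order of the tuple. -/
def phiList (a : Fin m → ℤ) : List ℤ :=
  ((List.range ℓ).reverse).flatMap fun p =>
    ((List.ofFn a).filter fun x => pOf e ℓ x = p + 1).map (phiOf e ℓ)

/-- The map `α̲ ↦ (ν, α)` of (A.7). -/
def bijMap (a : Fin m → ℤ) : (Fin ℓ → ℕ) × (Fin m → ℤ) :=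
  (nuOf e ℓ m a, fun j : Fin m => (phiList e ℓ m a).getD (j : ℕ) 0)

/-- Start of the `q`-th block of a composition `μ` (blocks of sizes `μ 0, μ 1, …`). -/
def bStart (μ : Fin ℓ → ℕ) (q : Fin ℓ) : ℕ := ∑ q' ∈ Finset.univ.filter (· < q), μ q'

/-- `i` and `j` lie in the same block of the composition `μ`. -/
def sameBlk (μ : Fin ℓ → ℕ) (i j : Fin m) : Prop :=
  ∃ q : Fin ℓ, (bStart ℓ μ q ≤ (i : ℕ) ∧ (i : ℕ) < bStart ℓ μ q + μ q) ∧
    (bStart ℓ μ q ≤ (j : ℕ) ∧ (j : ℕ) < bStart ℓ μ q + μ q)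

end

namespace List

variable {α β : Type*}

theorem ofFn_getD_of_length_eq {m : ℕ} {L : List α} (h : L.length = m) (d : α) :
    ofFn (fun i : Fin m => L.getD i d) = L := by
  subst h
  simp

theorem perm_flatMap_filter_eq [DecidableEq α] [DecidableEq β] {ks : List β} (hks : ks.Nodup)
    (f : α → β) {L : List α} (hL : ∀ x ∈ L, f x ∈ ks) :
    (ks.flatMap fun k => L.filter (f · = k)) ~ L := by
  rw [perm_iff_count]
  intro z
  by_cases hz : z ∈ L
  · have hcount : ∀ k, count z (L.filter (f · = k)) = if f z = k then count z L else 0 := by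
      intro k
      split_ifs with h
      · exact count_filter (by simpa using h)
      · exact count_eq_zero.2 fun hm => h (by simpa using (mem_filter.1 hm).2)
    rw [count_flatMap, Function.comp_def]
    simp only [hcount]
    rw [← sum_toFinset _ hks, Finset.sum_ite_eq]
    simp [hL z hz]
  · rw [count_eq_zero.2 hz, count_eq_zero]
    simp [hz]

theorem filter_flatMap_eq_of_nodup [DecidableEq β] {ks : List β} (hks : ks.Nodup) {f : α → β}
    {g : β → List α} (hg : ∀ k ∈ ks, ∀ x ∈ g k, f x = k) {k : β} (hk : k ∈ ks) :
    (ks.flatMap g).filter (f · = k) = g k := by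
  induction ks with
  | nil => simp at hk
  | cons k₀ ks ih =>
    rw [nodup_cons] at hks
    rw [flatMap_cons, filter_append]
    rcases eq_or_ne k k₀ with rfl | hne
    · rw [filter_eq_self.2, filter_eq_nil_iff.2, append_nil]
      · intro x hx
        obtain ⟨k', hk', hx⟩ := mem_flatMap.1 hx
        have := hg k' (mem_cons_of_mem _ hk') x hx
        simp only [decide_eq_true_eq]
        rintro rfl
        exact hks.1 (this ▸ hk')
      · intro x hx
        simpa using hg k (mem_cons_self ..) x hx
    · rw [filter_eq_nil_iff.2, nil_append]
      · exact ih hks.2 (fun k' hk' => hg k' (mem_cons_of_mem _ hk'))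
          ((mem_cons.1 hk).resolve_left hne)
      · intro x hx
        simpa [hg k₀ (mem_cons_self ..) x hx] using hne.symm

theorem prefix_drop_sum_take_flatten (Bs : List (List α)) {q : ℕ} (hq : q < Bs.length) :
    Bs[q] <+: Bs.flatten.drop ((Bs.map length).take q).sum := by
  rw [drop_sum_flatten, drop_eq_getElem_cons hq, flatten_cons]
  exact prefix_append _ _

theorem forall_pairwise_iff_of_flatten_eq {R : α → α → Prop} {Bs : List (List α)} {l : List α}
    {sz : List ℕ} (hl : Bs.flatten = l) (hsz : Bs.map length = sz) :
    (∀ B ∈ Bs, B.Pairwise R) ↔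
      ∀ (q : ℕ) (hq : q < sz.length) (i j : ℕ) (hi : i < l.length) (hj : j < l.length), i < j →
        (sz.take q).sum ≤ i → j < (sz.take q).sum + sz[q] → R l[i] l[j] := by
  subst hl hsz
  have hget : ∀ (q : ℕ) (hq : q < Bs.length) (t : ℕ) (ht : t < Bs[q].length),
      ∃ h, Bs.flatten[((Bs.map length).take q).sum + t]'h = Bs[q][t] := by
    intro q hq t ht
    have hpre := prefix_drop_sum_take_flatten Bs hq
    have hlen := hpre.length_le
    rw [length_drop] at hlen
    exact ⟨by omega, by rw [hpre.getElem ht, getElem_drop]⟩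
  constructor
  · intro h q hq i j hi hj hij hqi hqj
    simp only [length_map, getElem_map] at hq hqj
    obtain ⟨_, hi'⟩ := hget q hq (i - ((Bs.map length).take q).sum) (by omega)
    obtain ⟨_, hj'⟩ := hget q hq (j - ((Bs.map length).take q).sum) (by omega)
    simp only [Nat.add_sub_cancel' hqi, Nat.add_sub_cancel' (hqi.trans hij.le)] at hi' hj'
    rw [hi', hj']
    exact pairwise_iff_getElem.1 (h _ (getElem_mem hq)) _ _ _ _ (by omega)
  · intro h B hB
    obtain ⟨q, hq, rfl⟩ := getElem_of_mem hB
    rw [pairwise_iff_getElem]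
    intro t t' ht ht' htt'
    obtain ⟨hi, hi'⟩ := hget q hq t ht
    obtain ⟨hj, hj'⟩ := hget q hq t' ht'
    rw [← hi', ← hj']
    exact h q (by simpa using hq) _ _ hi hj (by omega) (by omega) (by simpa using ht')

theorem sum_ofFn_rev {M : Type*} [AddCommMonoid M] {n : ℕ} (f : Fin n → M) :
    (ofFn fun i => f (Fin.rev i)).sum = ∑ i, f i := by
  rw [sum_ofFn]
  exact Equiv.sum_comp Fin.revPerm f

theorem splitLengths_map_length_flatten (Bs : List (List α)) :
    (Bs.map length).splitLengths Bs.flatten = Bs := by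
  induction Bs with
  | nil => rfl
  | cons B Bs ih => simp [ih]

end List

section Decomposition

variable {e ℓ : ℕ}

theorem pOf_eq (a : ℤ) : pOf e ℓ a = ((a - 1) % (e * ℓ)).toNat / e + 1 := rfl

theorem phiOf_eq (a : ℤ) : phiOf e ℓ a = (a - 1) % e + 1 + e * ((a - 1) / (e * ℓ)) := rfl

-- The inverse of `a ↦ (p_a, φ_a)`, writing `φ = c + e r` with `c ∈ {1,…,e}`.
def ofPPhi (e ℓ p : ℕ) (φ : ℤ) : ℤ :=
  (φ - 1) % e + 1 + e * ((p : ℤ) - 1) + e * ℓ * ((φ - 1) / e)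

theorem ediv_emod_canonical {c r : ℤ} {p : ℕ} (hc : 1 ≤ c ∧ c ≤ e) (hp : 1 ≤ p ∧ p ≤ ℓ) :
    (c + e * ((p : ℤ) - 1) + e * ℓ * r - 1) / (e * ℓ) = r ∧
      (c + e * ((p : ℤ) - 1) + e * ℓ * r - 1) % (e * ℓ) = c - 1 + e * ((p : ℤ) - 1) := by
  have hp' : (1 : ℤ) ≤ p ∧ (p : ℤ) ≤ ℓ := by exact_mod_cast hp
  exact (Int.ediv_emod_unique (by nlinarith)).2 ⟨by ring, by nlinarith, by nlinarith⟩

theorem pOf_canonical {c r : ℤ} {p : ℕ} (hc : 1 ≤ c ∧ c ≤ e) (hp : 1 ≤ p ∧ p ≤ ℓ) :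
    pOf e ℓ (c + e * ((p : ℤ) - 1) + e * ℓ * r) = p := by
  rw [pOf_eq, (ediv_emod_canonical hc hp).2]
  have hdiv : (c - 1 + e * ((p : ℤ) - 1)).toNat / e = p - 1 := by
    apply Nat.div_eq_of_lt_le <;> zify [hp.1] <;> rw [Int.toNat_of_nonneg (by nlinarith)] <;>
      nlinarith
  omega

theorem phiOf_canonical {c r : ℤ} {p : ℕ} (hc : 1 ≤ c ∧ c ≤ e) (hp : 1 ≤ p ∧ p ≤ ℓ) :
    phiOf e ℓ (c + e * ((p : ℤ) - 1) + e * ℓ * r) = c + e * r := by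
  have hmod : (c + e * ((p : ℤ) - 1) + e * ℓ * r - 1) % e = c - 1 :=
    ((Int.ediv_emod_unique (q := (p : ℤ) - 1 + ℓ * r) (by omega)).2
      ⟨by ring, by omega, by omega⟩).2
  rw [phiOf_eq, (ediv_emod_canonical hc hp).1, hmod]
  ring

theorem exists_canonical (he : 0 < e) (hℓ : 0 < ℓ) (a : ℤ) :
    ∃ c r : ℤ, ∃ p : ℕ, (1 ≤ c ∧ c ≤ e) ∧ (1 ≤ p ∧ p ≤ ℓ) ∧
      a = c + e * ((p : ℤ) - 1) + e * ℓ * r := by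
  have he' : (0 : ℤ) < e := by exact_mod_cast he
  have heℓ : (0 : ℤ) < e * ℓ := by positivity
  set s := (a - 1) % (e * ℓ)
  have hs : 0 ≤ s ∧ s < e * ℓ := ⟨Int.emod_nonneg _ heℓ.ne', Int.emod_lt_of_pos _ heℓ⟩
  have hq : 0 ≤ s / e ∧ s / e < ℓ := ⟨Int.ediv_nonneg hs.1 he'.le, by
    rw [Int.ediv_lt_iff_lt_mul he']; linarith⟩
  refine ⟨s % e + 1, (a - 1) / (e * ℓ), (s / e).toNat + 1,
    ⟨by linarith [Int.emod_nonneg s he'.ne'], by linarith [Int.emod_lt_of_pos s he']⟩,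
    ⟨by omega, by omega⟩, ?_⟩
  push_cast
  rw [Int.toNat_of_nonneg hq.1]
  linarith [Int.emod_add_mul_ediv s e, Int.emod_add_mul_ediv (a - 1) (e * ℓ)]

theorem sub_one_emod_add_one_spec (he : 0 < e) (φ : ℤ) :
    (1 ≤ (φ - 1) % e + 1 ∧ (φ - 1) % e + 1 ≤ e) ∧ φ = (φ - 1) % e + 1 + e * ((φ - 1) / e) := by
  have he' : (0 : ℤ) < e := by exact_mod_cast he
  exact ⟨⟨by linarith [Int.emod_nonneg (φ - 1) he'.ne'],
    by linarith [Int.emod_lt_of_pos (φ - 1) he']⟩, by linarith [Int.emod_add_mul_ediv (φ - 1) e]⟩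

theorem pOf_ofPPhi (he : 0 < e) {p : ℕ} (hp : 1 ≤ p ∧ p ≤ ℓ) (φ : ℤ) :
    pOf e ℓ (ofPPhi e ℓ p φ) = p :=
  pOf_canonical (sub_one_emod_add_one_spec he φ).1 hp

theorem phiOf_ofPPhi (he : 0 < e) {p : ℕ} (hp : 1 ≤ p ∧ p ≤ ℓ) (φ : ℤ) :
    phiOf e ℓ (ofPPhi e ℓ p φ) = φ := by
  obtain ⟨hc, hφ⟩ := sub_one_emod_add_one_spec he φ
  rw [ofPPhi, phiOf_canonical hc hp, ← hφ]

theorem ofPPhi_pOf_phiOf (he : 0 < e) (hℓ : 0 < ℓ) (a : ℤ) :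
    ofPPhi e ℓ (pOf e ℓ a) (phiOf e ℓ a) = a := by
  obtain ⟨c, r, p, hc, hp, rfl⟩ := exists_canonical he hℓ a
  have hcr : (c + e * r - 1) / e = r ∧ (c + e * r - 1) % e = c - 1 :=
    (Int.ediv_emod_unique (by omega)).2 ⟨by ring, by omega, by omega⟩
  rw [pOf_canonical hc hp, phiOf_canonical hc hp, ofPPhi, hcr.1, hcr.2]
  ring

theorem pOf_mem_Icc (he : 0 < e) (hℓ : 0 < ℓ) (a : ℤ) : pOf e ℓ a ∈ Set.Icc 1 ℓ := by
  obtain ⟨c, r, p, hc, hp, rfl⟩ := exists_canonical he hℓ a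
  rwa [pOf_canonical hc hp]

theorem strictMono_ofPPhi (he : 0 < e) (hℓ : 0 < ℓ) (p : ℕ) : StrictMono (ofPPhi e ℓ p) := by
  intro φ φ' hlt
  have hℓ' : (1 : ℤ) ≤ ℓ := by exact_mod_cast hℓ
  obtain ⟨hc, hφ⟩ := sub_one_emod_add_one_spec he φ
  obtain ⟨hc', hφ'⟩ := sub_one_emod_add_one_spec he φ'
  rw [ofPPhi, ofPPhi]
  set q := (φ - 1) / e
  set q' := (φ' - 1) / e
  rcases lt_trichotomy q q' with hq | hq | hq
  · have : (e : ℤ) * ℓ * (q + 1) ≤ e * ℓ * q' := by gcongr; omega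
    nlinarith
  · rw [hq] at hφ ⊢; linarith
  · have : (e : ℤ) * (q' + 1) ≤ e * q := by gcongr; omega
    nlinarith

theorem phiOf_lt_phiOf (he : 0 < e) (hℓ : 0 < ℓ) {a b : ℤ} (hab : pOf e ℓ a = pOf e ℓ b)
    (h : a < b) : phiOf e ℓ a < phiOf e ℓ b := by
  rw [← ofPPhi_pOf_phiOf he hℓ a, ← ofPPhi_pOf_phiOf he hℓ b, hab] at h
  exact (strictMono_ofPPhi he hℓ _).lt_iff_lt.1 h

theorem existsUnique_canonical (he : 0 < e) (hℓ : 0 < ℓ) (a : ℤ) :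
    ∃! x : ℤ × ℤ × ℤ,
      (1 ≤ x.1 ∧ x.1 ≤ (e : ℤ)) ∧ (1 ≤ x.2.1 ∧ x.2.1 ≤ (ℓ : ℤ)) ∧
        a = x.1 + (e : ℤ) * (x.2.1 - 1) + (e : ℤ) * (ℓ : ℤ) * x.2.2 ∧
        x.2.1 = (pOf e ℓ a : ℤ) ∧ phiOf e ℓ a = x.1 + (e : ℤ) * x.2.2 := by
  obtain ⟨c, r, p, hc, hp, rfl⟩ := exists_canonical he hℓ a
  have hp' : (1 : ℤ) ≤ p ∧ (p : ℤ) ≤ ℓ := by exact_mod_cast hp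
  refine ⟨(c, p, r), ⟨hc, hp', rfl, by rw [pOf_canonical hc hp], phiOf_canonical hc hp⟩, ?_⟩
  rintro ⟨c', p', r'⟩ ⟨hc', -, ha, hp', -⟩
  rw [pOf_canonical hc hp] at hp'
  subst hp'
  have hr : r' = r := by
    rw [← (ediv_emod_canonical (r := r) hc hp).1, ha, (ediv_emod_canonical hc' hp).1]
  subst hr
  simp only [Prod.mk.injEq, and_true]
  linarith

end Decomposition

section Blocks

variable {e ℓ m : ℕ}

-- `ℓ, ℓ-1, …, 1`: the classes in the order of the blocks of `ν°`, so block `q` has class `ℓ - q`.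
def classes (ℓ : ℕ) : List ℕ := (List.range ℓ).reverse.map (· + 1)

theorem mem_classes {k : ℕ} : k ∈ classes ℓ ↔ 1 ≤ k ∧ k ≤ ℓ := by
  simp only [classes, List.mem_map, List.mem_reverse, List.mem_range]
  constructor
  · rintro ⟨p, hp, rfl⟩; omega
  · intro h; exact ⟨k - 1, by omega, by omega⟩

theorem nodup_classes : (classes ℓ).Nodup :=
  List.Nodup.map (add_left_injective 1) (List.nodup_reverse.2 List.nodup_range)

theorem map_classes_eq_ofFn {β : Type*} (g : ℕ → β) :
    (classes ℓ).map g = List.ofFn fun q : Fin ℓ => g (ℓ - q) := by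
  apply List.ext_getElem (by simp [classes])
  intro n h₁ h₂
  simp only [classes, List.length_map, List.length_reverse, List.length_range] at h₁
  simp only [classes, List.getElem_map, List.getElem_reverse, List.getElem_range,
    List.getElem_ofFn, List.length_range]
  congr 1
  omega

def classBlock (e ℓ : ℕ) (L : List ℤ) (k : ℕ) : List ℤ :=
  (L.filter (pOf e ℓ · = k)).map (phiOf e ℓ)

theorem phiList_eq_flatten (a : Fin m → ℤ) :
    phiList e ℓ m a = ((classes ℓ).map (classBlock e ℓ (List.ofFn a))).flatten := by
  rw [phiList, classes, List.flatMap_def, List.map_map]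
  rfl

theorem card_filter_univ_eq_length_filter_ofFn (a : Fin m → ℤ) (P : ℤ → Prop)
    [DecidablePred P] :
    (Finset.univ.filter fun i => P (a i)).card = ((List.ofFn a).filter (P ·)).length := by
  rw [List.ofFn_eq_map, List.filter_map, List.length_map, ← List.toFinset_card_of_nodup
    ((List.nodup_finRange m).filter _)]
  congr 1
  ext i
  simp

theorem map_length_classBlock (a : Fin m → ℤ) :
    (classes ℓ).map (fun k => (classBlock e ℓ (List.ofFn a) k).length) =
      List.ofFn fun q => nuOf e ℓ m a (Fin.rev q) := by
  rw [map_classes_eq_ofFn]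
  congr 1
  funext q
  rw [nuOf, card_filter_univ_eq_length_filter_ofFn a (pOf e ℓ · = _), classBlock,
    List.length_map, Fin.val_rev, show ℓ - ((q : ℕ) + 1) + 1 = ℓ - q by omega]

theorem bStart_eq_sum_take (μ : Fin ℓ → ℕ) (q : Fin ℓ) :
    bStart ℓ μ q = ((List.ofFn μ).take q).sum := by
  rw [List.sum_take_ofFn, bStart]
  rfl

def blockStrictAntiSet (ℓ m : ℕ) : Set ((Fin ℓ → ℕ) × (Fin m → ℤ)) :=
  {x | (∑ p, x.1 p = m) ∧
    ∀ i j : Fin m, (i : ℕ) < (j : ℕ) →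
      sameBlk ℓ m (fun q : Fin ℓ => x.1 (Fin.rev q)) i j → x.2 j < x.2 i}

theorem mem_blockStrictAntiSet_iff {x : (Fin ℓ → ℕ) × (Fin m → ℤ)} {Bs : List (List ℤ)}
    (hflat : Bs.flatten = List.ofFn x.2)
    (hlen : Bs.map List.length = List.ofFn fun q => x.1 (Fin.rev q)) :
    x ∈ blockStrictAntiSet ℓ m ↔ ∀ B ∈ Bs, B.SortedGT := by
  have hsum : ∑ p, x.1 p = m := by
    rw [← List.sum_ofFn_rev]
    simpa [← hlen, ← List.length_flatten] using congrArg List.length hflat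
  simp only [List.sortedGT_iff_pairwise, List.forall_pairwise_iff_of_flatten_eq hflat hlen,
    blockStrictAntiSet, Set.mem_ofPred_eq, hsum, true_and, sameBlk, bStart_eq_sum_take]
  constructor
  · intro h q hq i j hi hj hij hqi hqj
    simp only [List.length_ofFn, List.getElem_ofFn] at hq hi hj hqj ⊢
    exact h ⟨i, hi⟩ ⟨j, hj⟩ hij ⟨⟨q, hq⟩, ⟨hqi, by dsimp only; omega⟩, hqi.trans hij.le, hqj⟩
  · rintro h i j hij ⟨q, ⟨hqi, -⟩, -, hqj⟩
    simpa using h q (by simp) i j (by simp) (by simp) hij hqi (by simpa using hqj)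

theorem perm_flatMap_classes_filter (he : 0 < e) (hℓ : 0 < ℓ) (L : List ℤ) :
    ((classes ℓ).flatMap fun k => L.filter (pOf e ℓ · = k)).Perm L :=
  List.perm_flatMap_filter_eq nodup_classes _ fun x _ => mem_classes.2 (pOf_mem_Icc he hℓ x)

theorem length_flatten_map_classBlock (he : 0 < e) (hℓ : 0 < ℓ) (L : List ℤ) :
    ((classes ℓ).map (classBlock e ℓ L)).flatten.length = L.length := by
  rw [← (perm_flatMap_classes_filter he hℓ L).length_eq, ← List.flatMap_def,
    List.length_flatMap, List.length_flatMap]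
  simp [classBlock]

theorem sortedGT_classBlock (he : 0 < e) (hℓ : 0 < ℓ) {L : List ℤ} (hL : L.SortedGT) (k : ℕ) :
    (classBlock e ℓ L k).SortedGT := by
  rw [List.sortedGT_iff_pairwise, classBlock, List.pairwise_map]
  refine (hL.pairwise.filter _).imp_of_mem fun hx hy hxy => ?_
  simp only [List.mem_filter, decide_eq_true_eq] at hx hy
  exact phiOf_lt_phiOf he hℓ (hy.2.trans hx.2.symm) hxy

theorem length_phiList (he : 0 < e) (hℓ : 0 < ℓ) (a : Fin m → ℤ) :
    (phiList e ℓ m a).length = m := by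
  rw [phiList_eq_flatten, length_flatten_map_classBlock he hℓ, List.length_ofFn]

theorem flatten_map_classBlock (he : 0 < e) (hℓ : 0 < ℓ) (a : Fin m → ℤ) :
    ((classes ℓ).map (classBlock e ℓ (List.ofFn a))).flatten =
      List.ofFn (bijMap e ℓ m a).2 := by
  rw [← phiList_eq_flatten, bijMap, List.ofFn_getD_of_length_eq (length_phiList he hℓ a)]

theorem map_length_map_classBlock (a : Fin m → ℤ) :
    ((classes ℓ).map (classBlock e ℓ (List.ofFn a))).map List.length =
      List.ofFn fun q => (bijMap e ℓ m a).1 (Fin.rev q) := by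
  rw [List.map_map]
  exact map_length_classBlock a

theorem bijMap_eq_of_map_classBlock {a : Fin m → ℤ} {x : (Fin ℓ → ℕ) × (Fin m → ℤ)}
    {Bs : List (List ℤ)} (hBs : (classes ℓ).map (classBlock e ℓ (List.ofFn a)) = Bs)
    (hflat : Bs.flatten = List.ofFn x.2)
    (hlen : Bs.map List.length = List.ofFn fun q => x.1 (Fin.rev q)) :
    bijMap e ℓ m a = x := by
  have hν : (List.ofFn fun q => nuOf e ℓ m a (Fin.rev q)) =
      List.ofFn fun q => x.1 (Fin.rev q) := by
    rw [← hlen, ← hBs, List.map_map]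
    exact (map_length_classBlock a).symm
  refine Prod.ext (funext fun p => ?_) (funext fun j => ?_)
  · simpa [bijMap] using congrFun (List.ofFn_injective hν) (Fin.rev p)
  · simp [bijMap, phiList_eq_flatten, hBs, hflat]

theorem mapsTo_bijMap (he : 0 < e) (hℓ : 0 < ℓ) :
    Set.MapsTo (bijMap e ℓ m) {a | StrictAnti a} (blockStrictAntiSet ℓ m) := by
  intro a ha
  rw [mem_blockStrictAntiSet_iff (flatten_map_classBlock he hℓ a) (map_length_map_classBlock a)]
  simp only [List.mem_map]
  rintro _ ⟨k, -, rfl⟩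
  exact sortedGT_classBlock he hℓ (List.sortedGT_ofFn_iff.2 ha) k

def assemble (e ℓ : ℕ) (Bs : List (List ℤ)) : List ℤ :=
  (classes ℓ).flatMap fun k => (Bs.getD (ℓ - k) []).map (ofPPhi e ℓ k)

theorem map_classes_getD {Bs : List (List ℤ)} (h : Bs.length = ℓ) :
    (classes ℓ).map (fun k => Bs.getD (ℓ - k) []) = Bs := by
  rw [map_classes_eq_ofFn]
  conv_rhs => rw [← List.ofFn_getD_of_length_eq h []]
  congr 1
  funext q
  rw [Nat.sub_sub_self q.isLt.le]

theorem assemble_map_classes (g : ℕ → List ℤ) :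
    assemble e ℓ ((classes ℓ).map g) =
      (classes ℓ).flatMap fun k => (g k).map (ofPPhi e ℓ k) := by
  have hg := List.map_inj_left.1 (map_classes_getD (Bs := (classes ℓ).map g) (by simp [classes]))
  exact List.flatMap_congr fun k hk => by rw [hg k hk]

theorem insertionSort_assemble_map_classBlock (he : 0 < e) (hℓ : 0 < ℓ) {L : List ℤ}
    (hL : L.SortedGT) :
    (assemble e ℓ ((classes ℓ).map (classBlock e ℓ L))).insertionSort (· ≥ ·) = L := by
  have hblock : ∀ k, (classBlock e ℓ L k).map (ofPPhi e ℓ k) = L.filter (pOf e ℓ · = k) := by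
    intro k
    rw [classBlock, List.map_map, List.map_congr_left, List.map_id]
    intro x hx
    simp only [List.mem_filter, decide_eq_true_eq] at hx
    simp [← hx.2, ofPPhi_pOf_phiOf he hℓ]
  rw [assemble_map_classes]
  simp only [hblock]
  exact List.Perm.eq_of_sortedGE List.sortedGE_insertionSort hL.sortedGE
    ((List.perm_insertionSort _ _).trans (perm_flatMap_classes_filter he hℓ L))

section Assembled

variable (he : 0 < e) (hℓ : 0 < ℓ) {g : ℕ → List ℤ} (hg : ∀ k ∈ classes ℓ, (g k).SortedGT)
include he hℓ hg

theorem sortedGT_insertionSort_assemble :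
    ((assemble e ℓ ((classes ℓ).map g)).insertionSort (· ≥ ·)).SortedGT := by
  refine List.sortedGE_insertionSort.sortedGT_of_nodup
    ((List.perm_insertionSort _ _).nodup_iff.2 ?_)
  rw [assemble_map_classes, List.nodup_flatMap]
  refine ⟨fun k hk => ((strictMono_ofPPhi he hℓ k).sortedGT_listMap.2 (hg k hk)).nodup,
    nodup_classes.imp_of_mem fun {k k'} hk hk' hne => ?_⟩
  simp only [Function.onFun, List.disjoint_left, List.mem_map]
  rintro _ ⟨φ, -, rfl⟩ ⟨φ', -, h⟩
  have := congrArg (pOf e ℓ) h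
  rw [pOf_ofPPhi he (mem_classes.1 hk), pOf_ofPPhi he (mem_classes.1 hk')] at this
  exact hne this.symm

theorem map_classBlock_insertionSort_assemble :
    (classes ℓ).map
        (classBlock e ℓ ((assemble e ℓ ((classes ℓ).map g)).insertionSort (· ≥ ·))) =
      (classes ℓ).map g := by
  refine List.map_inj_left.2 fun k hk => ?_
  have hfilter : (assemble e ℓ ((classes ℓ).map g)).filter (pOf e ℓ · = k) =
      (g k).map (ofPPhi e ℓ k) := by
    rw [assemble_map_classes]
    refine List.filter_flatMap_eq_of_nodup nodup_classes (fun k' hk' x hx => ?_) hk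
    obtain ⟨φ, -, rfl⟩ := List.mem_map.1 hx
    exact pOf_ofPPhi he (mem_classes.1 hk') φ
  have hsorted : ((assemble e ℓ ((classes ℓ).map g)).insertionSort (· ≥ ·)).filter
      (pOf e ℓ · = k) = (g k).map (ofPPhi e ℓ k) := by
    refine List.Perm.eq_of_sortedGE (List.sortedGE_insertionSort.pairwise.filter _).sortedGE
      ((strictMono_ofPPhi he hℓ k).sortedGT_listMap.2 (hg k hk)).sortedGE ?_
    rw [← hfilter]
    exact (List.perm_insertionSort _ _).filter _
  rw [classBlock, hsorted, List.map_map]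
  simp [Function.comp_def, phiOf_ofPPhi he (mem_classes.1 hk)]

end Assembled

end Blocks

section Inverse

variable {e ℓ m : ℕ}

def targetBlocks (ℓ m : ℕ) (x : (Fin ℓ → ℕ) × (Fin m → ℤ)) : List (List ℤ) :=
  (List.ofFn fun q => x.1 (Fin.rev q)).splitLengths (List.ofFn x.2)

def invMap (e ℓ m : ℕ) (x : (Fin ℓ → ℕ) × (Fin m → ℤ)) : Fin m → ℤ :=
  fun i => ((assemble e ℓ (targetBlocks ℓ m x)).insertionSort (· ≥ ·)).getD i 0

theorem targetBlocks_bijMap (he : 0 < e) (hℓ : 0 < ℓ) (a : Fin m → ℤ) :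
    targetBlocks ℓ m (bijMap e ℓ m a) = (classes ℓ).map (classBlock e ℓ (List.ofFn a)) := by
  rw [targetBlocks, ← flatten_map_classBlock he hℓ a, ← map_length_map_classBlock a,
    List.splitLengths_map_length_flatten]

theorem invMap_bijMap (he : 0 < e) (hℓ : 0 < ℓ) {a : Fin m → ℤ} (ha : StrictAnti a) :
    invMap e ℓ m (bijMap e ℓ m a) = a := by
  funext i
  rw [invMap, targetBlocks_bijMap he hℓ,
    insertionSort_assemble_map_classBlock he hℓ (List.sortedGT_ofFn_iff.2 ha)]
  simp

theorem flatten_targetBlocks {x : (Fin ℓ → ℕ) × (Fin m → ℤ)} (hx : ∑ p, x.1 p = m) :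
    (targetBlocks ℓ m x).flatten = List.ofFn x.2 :=
  List.flatten_splitLengths _ _ (by rw [List.sum_ofFn_rev, hx, List.length_ofFn])

theorem map_length_targetBlocks {x : (Fin ℓ → ℕ) × (Fin m → ℤ)} (hx : ∑ p, x.1 p = m) :
    (targetBlocks ℓ m x).map List.length = List.ofFn fun q => x.1 (Fin.rev q) :=
  List.map_splitLengths_length _ _ (by rw [List.sum_ofFn_rev, hx, List.length_ofFn])

theorem exists_map_classes_eq_targetBlocks {x : (Fin ℓ → ℕ) × (Fin m → ℤ)}
    (hx : x ∈ blockStrictAntiSet ℓ m) :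
    ∃ g : ℕ → List ℤ, (∀ k ∈ classes ℓ, (g k).SortedGT) ∧
      (classes ℓ).map g = targetBlocks ℓ m x := by
  let g k := (targetBlocks ℓ m x).getD (ℓ - k) []
  have hBs : (classes ℓ).map g = targetBlocks ℓ m x :=
    map_classes_getD (by simp [targetBlocks])
  refine ⟨g, fun k hk => ?_, hBs⟩
  refine (mem_blockStrictAntiSet_iff (flatten_targetBlocks hx.1)
    (map_length_targetBlocks hx.1)).1 hx _ ?_
  exact hBs ▸ List.mem_map_of_mem hk

theorem ofFn_invMap_spec (he : 0 < e) (hℓ : 0 < ℓ) {x : (Fin ℓ → ℕ) × (Fin m → ℤ)}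
    (hx : x ∈ blockStrictAntiSet ℓ m) :
    (List.ofFn (invMap e ℓ m x)).SortedGT ∧
      (classes ℓ).map (classBlock e ℓ (List.ofFn (invMap e ℓ m x))) = targetBlocks ℓ m x := by
  obtain ⟨g, hg, hBs⟩ := exists_map_classes_eq_targetBlocks hx
  set S := (assemble e ℓ ((classes ℓ).map g)).insertionSort (· ≥ ·)
  have hmap : (classes ℓ).map (classBlock e ℓ S) = targetBlocks ℓ m x := by
    rw [map_classBlock_insertionSort_assemble he hℓ hg, hBs]
  have hlen : S.length = m := by
    rw [← length_flatten_map_classBlock he hℓ S, hmap, flatten_targetBlocks hx.1,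
      List.length_ofFn]
  have hofFn : List.ofFn (invMap e ℓ m x) = S := by
    unfold invMap
    rw [← hBs]
    exact List.ofFn_getD_of_length_eq hlen 0
  exact ⟨hofFn ▸ sortedGT_insertionSort_assemble he hℓ hg, hofFn ▸ hmap⟩

theorem mapsTo_invMap (he : 0 < e) (hℓ : 0 < ℓ) :
    Set.MapsTo (invMap e ℓ m) (blockStrictAntiSet ℓ m) {a | StrictAnti a} :=
  fun _ hx => List.sortedGT_ofFn_iff.1 (ofFn_invMap_spec he hℓ hx).1

theorem invOn_invMap (he : 0 < e) (hℓ : 0 < ℓ) :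
    Set.InvOn (invMap e ℓ m) (bijMap e ℓ m) {a | StrictAnti a} (blockStrictAntiSet ℓ m) :=
  ⟨fun _ ha => invMap_bijMap he hℓ ha, fun _ hx =>
    bijMap_eq_of_map_classBlock (ofFn_invMap_spec he hℓ hx).2 (flatten_targetBlocks hx.1)
      (map_length_targetBlocks hx.1)⟩

end Inverse

theorem stmt_13_general (e ℓ m : ℕ) (he : 1 < e) (hℓ : 0 < ℓ) :
    (∀ a : ℤ, ∃! x : ℤ × ℤ × ℤ,
      (1 ≤ x.1 ∧ x.1 ≤ (e : ℤ)) ∧ (1 ≤ x.2.1 ∧ x.2.1 ≤ (ℓ : ℤ)) ∧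
        a = x.1 + (e : ℤ) * (x.2.1 - 1) + (e : ℤ) * (ℓ : ℤ) * x.2.2 ∧
        x.2.1 = (pOf e ℓ a : ℤ) ∧ phiOf e ℓ a = x.1 + (e : ℤ) * x.2.2) ∧
    Set.BijOn (bijMap e ℓ m)
      {a : Fin m → ℤ | StrictAnti a}
      {x : (Fin ℓ → ℕ) × (Fin m → ℤ) |
        (∑ p, x.1 p = m) ∧
        -- strictly decreasing within each block of the reversed composition ν°
        (∀ i j : Fin m, (i : ℕ) < (j : ℕ) →
          sameBlk ℓ m (fun q : Fin ℓ => x.1 (Fin.rev q)) i j → x.2 j < x.2 i)} := by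
  have he₀ : 0 < e := by omega
  exact ⟨existsUnique_canonical he₀ hℓ,
    (invOn_invMap he₀ hℓ).bijOn (mapsTo_bijMap he₀ hℓ) (mapsTo_invMap he₀ hℓ)⟩

/-- (A.7): writing each `a ∈ ℤ` uniquely as `a = c_a + e(p_a-1) + eℓ r_a` with
`c_a ∈ {1,…,e}`, `p_a ∈ {1,…,ℓ}`, `r_a ∈ ℤ`, and setting `φ_a = c_a + e r_a`,
the assignment `α̲ ↦ (ν, α)` — where `ν ∈ 𝒞_{m,ℓ}` records the multiset of
values `p_{a_i}` and `α` lists the `φ_{a_i}` regrouped by the minimal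
permutation sorting the `p`-values into `(ℓ^{ν_ℓ},…,2^{ν_2},1^{ν_1})` — is a
bijection from strictly decreasing `m`-tuples of integers onto
`⊔_ν ℤ^{ν°}_{>0} × {ν}`, where `ℤ^{ν°}_{>0}` consists of the tuples strictly
decreasing within each block of the reversed composition `ν° = (ν_ℓ,…,ν_1)`. -/
theorem stmt_13 (e ℓ m : ℕ) (he : 1 < e) (hℓ : 0 < ℓ) (hm : 0 < m) :
    (∀ a : ℤ, ∃! x : ℤ × ℤ × ℤ,
      (1 ≤ x.1 ∧ x.1 ≤ (e : ℤ)) ∧ (1 ≤ x.2.1 ∧ x.2.1 ≤ (ℓ : ℤ)) ∧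
        a = x.1 + (e : ℤ) * (x.2.1 - 1) + (e : ℤ) * (ℓ : ℤ) * x.2.2 ∧
        x.2.1 = (pOf e ℓ a : ℤ) ∧ phiOf e ℓ a = x.1 + (e : ℤ) * x.2.2) ∧
    Set.BijOn (bijMap e ℓ m)
      {a : Fin m → ℤ | StrictAnti a}
      {x : (Fin ℓ → ℕ) × (Fin m → ℤ) |
        (∑ p, x.1 p = m) ∧
        -- strictly decreasing within each block of the reversed composition ν°
        (∀ i j : Fin m, (i : ℕ) < (j : ℕ) →
          sameBlk ℓ m (fun q : Fin ℓ => x.1 (Fin.rev q)) i j → x.2 j < x.2 i)} :=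
  stmt_13_general e ℓ m he hℓ
end
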